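/- arXiv:2004.07184 — 3 statements merged into one kernel-verified Lean document; each statement's English description precedes it below -/
import Mathlib

section
/- Characterization of the strong basin via the weak basin: in a Boolean network with at least one node, for every attractor A, a state s belongs to strongBasin(A) if and only if reach(s) ∩ A ≠ ∅ and reach(s) ⊆ weakBasin(A). -/
/-! Every state reaches some attractor: a state of minimal reachable set inside `reach s` generates
one, by finiteness of the state space. So if everything reachable from `s` still reaches `A`,
any attractor `A'` met from `s` also reaches `A`, and since an attractor is closed under reachability
it shares a state with `A`, forcing `A' = A`. Conversely, a state reachable from `s` that misses `A`
would lead to an attractor other than `A`. -/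

def step {n : ℕ} (f : Fin n → (Fin n → Bool) → Bool) (s s' : Fin n → Bool) : Prop :=
  ∃ i : Fin n, s' = Function.update s i (f i s)

def reach {n : ℕ} (f : Fin n → (Fin n → Bool) → Bool) (s : Fin n → Bool) :
    Set (Fin n → Bool) :=
  {s' | Relation.ReflTransGen (step f) s s'}

def IsAttractor {n : ℕ} (f : Fin n → (Fin n → Bool) → Bool)
    (A : Set (Fin n → Bool)) : Prop :=
  A.Nonempty ∧ ∀ s ∈ A, reach f s = A

def weakBasin {n : ℕ} (f : Fin n → (Fin n → Bool) → Bool)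
    (A : Set (Fin n → Bool)) : Set (Fin n → Bool) :=
  {s | (reach f s ∩ A).Nonempty}

def strongBasin {n : ℕ} (f : Fin n → (Fin n → Bool) → Bool)
    (A : Set (Fin n → Bool)) : Set (Fin n → Bool) :=
  {s | (reach f s ∩ A).Nonempty ∧
    ∀ A', IsAttractor f A' → A' ≠ A → reach f s ∩ A' = ∅}

section

variable {n : ℕ} {f : Fin n → (Fin n → Bool) → Bool}

lemma mem_reach_self (s : Fin n → Bool) : s ∈ reach f s :=
  Relation.ReflTransGen.refl

lemma reach_subset_of_mem {s t : Fin n → Bool} (ht : t ∈ reach f s) :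
    reach f t ⊆ reach f s :=
  fun _ hu => Relation.ReflTransGen.trans ht hu

lemma IsAttractor.eq_of_mem {A A' : Set (Fin n → Bool)} (hA : IsAttractor f A)
    (hA' : IsAttractor f A') {a : Fin n → Bool} (haA : a ∈ A) (haA' : a ∈ A') : A = A' :=
  (hA.2 a haA).symm.trans (hA'.2 a haA')

lemma IsAttractor.reach_subset {A : Set (Fin n → Bool)} (hA : IsAttractor f A)
    {t : Fin n → Bool} (ht : t ∈ A) : reach f t ⊆ A :=
  (hA.2 t ht).subset

lemma exists_isAttractor_inter_reach_nonempty (s : Fin n → Bool) :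
    ∃ A, IsAttractor f A ∧ (reach f s ∩ A).Nonempty := by
  obtain ⟨t, hts, hmin⟩ := Set.exists_min_image (reach f s)
    (fun t => (reach f t).ncard) (Set.toFinite _) ⟨s, mem_reach_self s⟩
  refine ⟨reach f t, ⟨⟨t, mem_reach_self t⟩, fun u hu => ?_⟩, t, hts, mem_reach_self t⟩
  exact Set.eq_of_subset_of_ncard_le (reach_subset_of_mem hu)
    (hmin u (reach_subset_of_mem hts hu)) (Set.toFinite _)

end

theorem strongBasin_iff_general {n : ℕ} (f : Fin n → (Fin n → Bool) → Bool)
    (A : Set (Fin n → Bool)) (hA : IsAttractor f A) (s : Fin n → Bool) :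
    s ∈ strongBasin f A ↔
      (reach f s ∩ A).Nonempty ∧ reach f s ⊆ weakBasin f A := by
  constructor
  · rintro ⟨hne, hdisj⟩
    refine ⟨hne, fun t hts => ?_⟩
    obtain ⟨A', hA', u, hut, huA'⟩ := exists_isAttractor_inter_reach_nonempty (f := f) t
    obtain rfl : A' = A := by
      by_contra hne'
      have hu : u ∈ reach f s ∩ A' := ⟨reach_subset_of_mem hts hut, huA'⟩
      simp [hdisj A' hA' hne'] at hu
    exact ⟨u, hut, huA'⟩
  · rintro ⟨hne, hweak⟩
    refine ⟨hne, fun A' hA' hne' => Set.eq_empty_of_forall_notMem fun t ⟨hts, htA'⟩ => hne' ?_⟩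
    obtain ⟨a, hat, haA⟩ := hweak hts
    exact hA'.eq_of_mem hA (hA'.reach_subset htA' hat) haA

theorem strongBasin_iff {n : ℕ} (hn : 1 ≤ n) (f : Fin n → (Fin n → Bool) → Bool)
    (A : Set (Fin n → Bool)) (hA : IsAttractor f A) (s : Fin n → Bool) :
    s ∈ strongBasin f A ↔
      (reach f s ∩ A).Nonempty ∧ reach f s ⊆ weakBasin f A :=
  strongBasin_iff_general f A hA s
end

section
/- Key invariance lemma for temporary control: for a control C = (O, I) and an attractor A_t of the original network, the set W = strongBasin(A_t) ∩ S|_C is forward-invariant under the controlled dynamics: if s ∈ W and stepC s s', then s' ∈ W. Hence once the controlled network enters W, it remains in W, so releasing the temporary control at any later time yields a state in strongBasin(A_t). -/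
def controlledF {n : ℕ} (O I : Finset (Fin n)) (f : Fin n → (Fin n → Bool) → Bool)
    (i : Fin n) (s : Fin n → Bool) : Bool :=
  if i ∈ O then false else if i ∈ I then true else f i s

def applyControl {n : ℕ} (O I : Finset (Fin n)) (s : Fin n → Bool) :
    Fin n → Bool :=
  fun i => if i ∈ O then false else if i ∈ I then true else s i

def controlledSpace {n : ℕ} (O I : Finset (Fin n)) : Set (Fin n → Bool) :=
  {s | (∀ i ∈ O, s i = false) ∧ (∀ i ∈ I, s i = true)}

/-! Along a step `s → s'` of `f` the reachable set can only shrink, and from every state some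
attractor is reachable because the state space is finite; together these keep `s'` in every
strong basin containing `s`. Inside `S|_C` a controlled step either leaves the state unchanged
(the updated node is already pinned at its control value) or is a step of `f` at an uncontrolled
node, which keeps the state in `S|_C`. -/

section

variable {n : ℕ} {f : Fin n → (Fin n → Bool) → Bool}

lemma reach_subset_of_step {s s' : Fin n → Bool} (h : step f s s') :
    reach f s' ⊆ reach f s :=
  fun _ hu => Relation.ReflTransGen.head h hu

lemma mem_strongBasin_of_reach_subset {A : Set (Fin n → Bool)} {s t : Fin n → Bool}
    (hs : s ∈ strongBasin f A) (hts : reach f t ⊆ reach f s) : t ∈ strongBasin f A := by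
  refine ⟨?_, fun A' hA' hne => Set.subset_eq_empty (Set.inter_subset_inter_left _ hts)
    (hs.2 A' hA' hne)⟩
  obtain ⟨B, hB, hBt⟩ := exists_isAttractor_inter_reach_nonempty (f := f) t
  obtain rfl : B = A := by_contra fun hne =>
    (hBt.mono (Set.inter_subset_inter_left _ hts)).ne_empty (hs.2 B hB hne)
  exact hBt

lemma mem_strongBasin_of_step {A : Set (Fin n → Bool)} {s t : Fin n → Bool}
    (hs : s ∈ strongBasin f A) (h : step f s t) : t ∈ strongBasin f A :=
  mem_strongBasin_of_reach_subset hs (reach_subset_of_step h)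

variable {O I : Finset (Fin n)} {s s' : Fin n → Bool}

lemma update_mem_controlledSpace (hs : s ∈ controlledSpace O I) {i : Fin n} (hiO : i ∉ O)
    (hiI : i ∉ I) (b : Bool) : Function.update s i b ∈ controlledSpace O I := by
  constructor
  · intro j hj
    rw [Function.update_of_ne (ne_of_mem_of_not_mem hj hiO)]
    exact hs.1 j hj
  · intro j hj
    rw [Function.update_of_ne (ne_of_mem_of_not_mem hj hiI)]
    exact hs.2 j hj

lemma eq_or_exists_uncontrolled_update_of_step_controlledF (hs : s ∈ controlledSpace O I)
    (h : step (controlledF O I f) s s') :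
    s' = s ∨ ∃ i, i ∉ O ∧ i ∉ I ∧ s' = Function.update s i (f i s) := by
  obtain ⟨i, rfl⟩ := h
  by_cases hiO : i ∈ O
  · left
    simp [controlledF, hiO, hs.1 i hiO]
  by_cases hiI : i ∈ I
  · left
    simp [controlledF, hiO, hiI, hs.2 i hiI]
  · exact .inr ⟨i, hiO, hiI, by simp only [controlledF, hiO, hiI, if_false]⟩

end

theorem temp_control_invariance_general {n : ℕ} (f : Fin n → (Fin n → Bool) → Bool)
    (O I : Finset (Fin n))
    (At : Set (Fin n → Bool))
    (s s' : Fin n → Bool)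
    (hs : s ∈ strongBasin f At ∩ controlledSpace O I)
    (hstep : step (controlledF O I f) s s') :
    s' ∈ strongBasin f At ∩ controlledSpace O I := by
  obtain ⟨hsB, hsC⟩ := hs
  rcases eq_or_exists_uncontrolled_update_of_step_controlledF hsC hstep
    with rfl | ⟨i, hiO, hiI, rfl⟩
  · exact ⟨hsB, hsC⟩
  · exact ⟨mem_strongBasin_of_step hsB ⟨i, rfl⟩, update_mem_controlledSpace hsC hiO hiI _⟩

theorem temp_control_invariance {n : ℕ} (f : Fin n → (Fin n → Bool) → Bool)
    (O I : Finset (Fin n)) (hdisj : Disjoint O I)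
    (At : Set (Fin n → Bool)) (hAt : IsAttractor f At)
    (s s' : Fin n → Bool)
    (hs : s ∈ strongBasin f At ∩ controlledSpace O I)
    (hstep : step (controlledF O I f) s s') :
    s' ∈ strongBasin f At ∩ controlledSpace O I :=
  temp_control_invariance_general f O I At s s' hs hstep
end

section
/- Every attractor of the controlled network that meets the controlled part of the strong basin of the target is entirely contained in it: for a control C = (O, I) and an attractor A_t of the original network, let W = strongBasin(A_t) ∩ S|_C; if A' is an attractor of the asynchronous transition system of G|_C (i.e., A' is nonempty and reachC(s) = A' for every s ∈ A') and A' ∩ W ≠ ∅, then A' ⊆ W. -/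
/-! On `S|_C` the clamped coordinates already hold their forced values, so a controlled update
either changes nothing or is an update of the original network, and it stays in `S|_C`. Hence any
two states of a controlled attractor meeting `S|_C` reach each other in the original network, so
they have the same original reach set, and membership in a strong basin depends only on that. -/

section Controlled

variable {n : ℕ} {f : Fin n → (Fin n → Bool) → Bool} {O I : Finset (Fin n)}
  {s s' : Fin n → Bool}

lemma step_controlledF_mem_controlledSpace (hs : s ∈ controlledSpace O I)
    (h : step (controlledF O I f) s s') : s' ∈ controlledSpace O I := by
  obtain ⟨i, rfl⟩ := h
  constructor
  · intro j hj
    by_cases hij : j = i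
    · subst hij; simp [controlledF, hj]
    · rw [Function.update_of_ne hij]; exact hs.1 j hj
  · intro j hj
    by_cases hij : j = i
    · subst hij
      have hjO : j ∉ O := fun hjO => by simpa [hs.1 j hjO] using hs.2 j hj
      simp [controlledF, hj, hjO]
    · rw [Function.update_of_ne hij]; exact hs.2 j hj

lemma step_controlledF_eq_or_step (hs : s ∈ controlledSpace O I)
    (h : step (controlledF O I f) s s') : s' = s ∨ step f s s' := by
  obtain ⟨i, rfl⟩ := h
  by_cases hO : i ∈ O
  · left; simp [controlledF, hO, hs.1 i hO]
  by_cases hI : i ∈ I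
  · left; simp [controlledF, hO, hI, hs.2 i hI]
  · right; exact ⟨i, by simp [controlledF, hO, hI]⟩

lemma reach_controlledF_subset_controlledSpace (hs : s ∈ controlledSpace O I) :
    reach (controlledF O I f) s ⊆ controlledSpace O I := by
  intro t ht
  induction ht with
  | refl => exact hs
  | tail _ hstep ih => exact step_controlledF_mem_controlledSpace ih hstep

lemma reach_controlledF_subset_reach (hs : s ∈ controlledSpace O I) :
    reach (controlledF O I f) s ⊆ reach f s := by
  intro t ht
  induction ht with
  | refl => exact Relation.ReflTransGen.refl
  | @tail u v hsu huv ih =>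
    rcases step_controlledF_eq_or_step (reach_controlledF_subset_controlledSpace hs hsu) huv
      with rfl | huv
    · exact ih
    · exact ih.tail huv

end Controlled

section Reach

variable {n : ℕ} {f : Fin n → (Fin n → Bool) → Bool} {s t : Fin n → Bool}

lemma reach_subset_of_mem_reach (h : t ∈ reach f s) : reach f t ⊆ reach f s :=
  fun _ hu => Relation.ReflTransGen.trans h hu

lemma IsAttractor.mem_reach {A : Set (Fin n → Bool)} (hA : IsAttractor f A) (hs : s ∈ A)
    (ht : t ∈ A) : t ∈ reach f s := by
  rwa [hA.2 s hs]

lemma mem_strongBasin_of_reach_eq {A : Set (Fin n → Bool)} (h : reach f t = reach f s)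
    (hs : s ∈ strongBasin f A) : t ∈ strongBasin f A := by
  simpa only [strongBasin, Set.mem_ofPred_eq, h] using hs

end Reach

theorem controlled_attractor_in_W_general {n : ℕ} (f : Fin n → (Fin n → Bool) → Bool)
    (O I : Finset (Fin n))
    (At : Set (Fin n → Bool))
    (A' : Set (Fin n → Bool)) (hA' : IsAttractor (controlledF O I f) A')
    (hmeet : (A' ∩ (strongBasin f At ∩ controlledSpace O I)).Nonempty) :
    A' ⊆ strongBasin f At ∩ controlledSpace O I := by
  obtain ⟨s₀, hs₀A', hs₀W, hs₀C⟩ := hmeet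
  intro s hsA'
  have hs₀s : s ∈ reach (controlledF O I f) s₀ := hA'.mem_reach hs₀A' hsA'
  have hsC : s ∈ controlledSpace O I := reach_controlledF_subset_controlledSpace hs₀C hs₀s
  have hss₀ : s₀ ∈ reach (controlledF O I f) s := hA'.mem_reach hsA' hs₀A'
  have hreach : reach f s = reach f s₀ :=
    (reach_subset_of_mem_reach (reach_controlledF_subset_reach hs₀C hs₀s)).antisymm
      (reach_subset_of_mem_reach (reach_controlledF_subset_reach hsC hss₀))
  exact ⟨mem_strongBasin_of_reach_eq hreach hs₀W, hsC⟩

theorem controlled_attractor_in_W {n : ℕ} (f : Fin n → (Fin n → Bool) → Bool)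
    (O I : Finset (Fin n)) (hdisj : Disjoint O I)
    (At : Set (Fin n → Bool)) (hAt : IsAttractor f At)
    (A' : Set (Fin n → Bool)) (hA' : IsAttractor (controlledF O I f) A')
    (hmeet : (A' ∩ (strongBasin f At ∩ controlledSpace O I)).Nonempty) :
    A' ⊆ strongBasin f At ∩ controlledSpace O I :=
  controlled_attractor_in_W_general f O I At A' hA' hmeet
end
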